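/- In the linear structural model, the minimizer of the empirical cross-fold risk over linear functions $h(s) = s\beta$ equals the $L$-fold JIVE: $\hat\beta = (\sum_{a=1}^K\sum_{v=1}^L \bar S_{a,-v}^\top \bar S_{a,v})^{-1} \sum_{a=1}^K\sum_{v=1}^L \bar S_{a,-v}^\top \bar Y_{a,v}$, provided the matrix $\sum_{a,v}\bar S_{a,-v}^\top \bar S_{a,v}$ is symmetric positive definite. -/

import Mathlib

/-! Up to the factor `1 / (2KL)`, the risk is the quadratic `q β = βᵀ M β - 2 bᵀ β` with
`M = ∑ S̄_{a,-v}ᵀ S̄_{a,v}` and `b = ∑ S̄_{a,-v}ᵀ Ȳ_{a,v}`. For symmetric `M` and `M β̂ = b`,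
completing the square gives `q β = q β̂ + (β - β̂)ᵀ M (β - β̂)`, so positive definiteness makes
`β̂ = M⁻¹ b` the unique minimizer. -/

open Finset Matrix

/-- Empirical cross-fold risk restricted to linear bridge functions h(s)=sβ,
expressed via cell-fold aggregates. -/
noncomputable def linEmpRisk {K L d : ℕ}
    (Sout : Fin K → Fin L → Fin d → ℝ)  -- leave-fold-out means S̄_{a,-v}
    (Sbar : Fin K → Fin L → Fin d → ℝ)  -- fold means S̄_{a,v}
    (Ybar : Fin K → Fin L → ℝ)          -- fold means Ȳ_{a,v}
    (β : Fin d → ℝ) : ℝ :=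
  - (1 / ((K : ℝ) * L)) * ∑ a, ∑ v, (∑ p, Sout a v p * β p) * Ybar a v
  + (1 / (2 * (K : ℝ) * L)) * ∑ a, ∑ v,
      (∑ p, Sout a v p * β p) * (∑ p, Sbar a v p * β p)

namespace Matrix

variable {n R : Type*} [Fintype n]

def quadObjective [CommRing R] (M : Matrix n n R) (b x : n → R) : R :=
  x ⬝ᵥ M *ᵥ x - 2 * (b ⬝ᵥ x)

theorem IsSymm.dotProduct_mulVec_comm [CommSemiring R] {M : Matrix n n R} (hM : M.IsSymm)
    (x y : n → R) : x ⬝ᵥ M *ᵥ y = y ⬝ᵥ M *ᵥ x := by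
  rw [dotProduct_mulVec, ← mulVec_transpose, hM.eq, dotProduct_comm]

theorem IsSymm.quadObjective_eq_add [CommRing R] {M : Matrix n n R} (hM : M.IsSymm)
    {b x₀ : n → R} (hx₀ : M *ᵥ x₀ = b) (x : n → R) :
    M.quadObjective b x = M.quadObjective b x₀ + (x - x₀) ⬝ᵥ M *ᵥ (x - x₀) := by
  subst hx₀
  simp only [quadObjective, dotProduct_comm (M *ᵥ x₀), mulVec_sub, dotProduct_sub,
    sub_dotProduct, hM.dotProduct_mulVec_comm x₀ x]
  ring

variable [DecidableEq n] {M : Matrix n n ℝ}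

theorem PosDef.quadObjective_eq_add (hM : M.PosDef) (b x : n → ℝ) :
    M.quadObjective b x =
      M.quadObjective b (M⁻¹ *ᵥ b) + (x - M⁻¹ *ᵥ b) ⬝ᵥ M *ᵥ (x - M⁻¹ *ᵥ b) := by
  have hsymm : M.IsSymm := isHermitian_iff_isSymm.mp hM.isHermitian
  refine hsymm.quadObjective_eq_add ?_ x
  rw [mulVec_mulVec, mul_nonsing_inv M ((isUnit_iff_isUnit_det M).mp hM.isUnit), one_mulVec]

theorem PosDef.quadObjective_inv_mulVec_le (hM : M.PosDef) (b x : n → ℝ) :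
    M.quadObjective b (M⁻¹ *ᵥ b) ≤ M.quadObjective b x := by
  rw [hM.quadObjective_eq_add b x]
  simpa using hM.posSemidef.dotProduct_mulVec_nonneg (x - M⁻¹ *ᵥ b)

theorem PosDef.quadObjective_inv_mulVec_lt (hM : M.PosDef) {b x : n → ℝ} (hx : x ≠ M⁻¹ *ᵥ b) :
    M.quadObjective b (M⁻¹ *ᵥ b) < M.quadObjective b x := by
  rw [hM.quadObjective_eq_add b x]
  simpa using hM.dotProduct_mulVec_pos (sub_ne_zero.mpr hx)

end Matrix

theorem linEmpRisk_eq_quadObjective {K L d : ℕ}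
    (Sout Sbar : Fin K → Fin L → Fin d → ℝ) (Ybar : Fin K → Fin L → ℝ) (β : Fin d → ℝ) :
    linEmpRisk Sout Sbar Ybar β =
      (2 * (K : ℝ) * L)⁻¹ * quadObjective (fun p q => ∑ a, ∑ v, Sout a v p * Sbar a v q)
        (fun p => ∑ a, ∑ v, Sout a v p * Ybar a v) β := by
  have hgram : (fun p q => ∑ a, ∑ v, Sout a v p * Sbar a v q : Matrix (Fin d) (Fin d) ℝ) =
      ∑ a, ∑ v, vecMulVec (Sout a v) (Sbar a v) := by
    ext p q
    simp [Matrix.sum_apply, vecMulVec_apply]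
  have hmoment : (fun p => ∑ a, ∑ v, Sout a v p * Ybar a v) = ∑ a, ∑ v, Ybar a v • Sout a v := by
    ext p
    simp [Finset.sum_apply, mul_comm]
  have hquad : β ⬝ᵥ (∑ a, ∑ v, vecMulVec (Sout a v) (Sbar a v)) *ᵥ β =
      ∑ a, ∑ v, (Sout a v ⬝ᵥ β) * (Sbar a v ⬝ᵥ β) := by
    simp only [sum_mulVec, dotProduct_sum, vecMulVec_mulVec, op_smul_eq_smul, dotProduct_smul,
      smul_eq_mul]
    exact sum_congr rfl fun a _ ↦ sum_congr rfl fun v _ ↦ by rw [dotProduct_comm β, mul_comm]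
  have hlin : (∑ a, ∑ v, Ybar a v • Sout a v) ⬝ᵥ β = ∑ a, ∑ v, (Sout a v ⬝ᵥ β) * Ybar a v := by
    simp [sum_dotProduct, mul_comm]
  unfold quadObjective
  rw [hgram, hmoment, hquad, hlin]
  unfold linEmpRisk
  simp only [dotProduct, one_div, mul_assoc, mul_inv]
  ring

/-- the minimizer of the empirical cross-fold risk over linear
functions is the L-fold JIVE
β̂ = (∑_{a,v} S̄_{a,-v}ᵀ S̄_{a,v})⁻¹ ∑_{a,v} S̄_{a,-v}ᵀ Ȳ_{a,v},
provided ∑_{a,v} S̄_{a,-v}ᵀ S̄_{a,v} is symmetric positive definite. -/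
theorem stmt10 {K L d : ℕ} (hK : 0 < K) (hL : 0 < L)
    (Sout Sbar : Fin K → Fin L → Fin d → ℝ) (Ybar : Fin K → Fin L → ℝ)
    (M : Matrix (Fin d) (Fin d) ℝ)
    (hM : M = fun p q => ∑ a, ∑ v, Sout a v p * Sbar a v q)
    (b : Fin d → ℝ)
    (hb : b = fun p => ∑ a, ∑ v, Sout a v p * Ybar a v)
    (hMpd : M.PosDef) :
    (∀ β : Fin d → ℝ,
      linEmpRisk Sout Sbar Ybar (M⁻¹.mulVec b) ≤ linEmpRisk Sout Sbar Ybar β)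
    ∧ (∀ β : Fin d → ℝ,
        (∀ β' : Fin d → ℝ,
          linEmpRisk Sout Sbar Ybar β ≤ linEmpRisk Sout Sbar Ybar β') →
        β = M⁻¹.mulVec b) := by
  subst hM hb
  have hc : 0 < (2 * (K : ℝ) * L)⁻¹ := by positivity
  simp only [linEmpRisk_eq_quadObjective]
  refine ⟨fun β ↦ mul_le_mul_of_nonneg_left (hMpd.quadObjective_inv_mulVec_le _ β) hc.le,
    fun β hmin ↦ ?_⟩
  by_contra hne
  exact (hmin _).not_gt (mul_lt_mul_of_pos_left (hMpd.quadObjective_inv_mulVec_lt hne) hc)
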